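/- arXiv:2602.13558 — 2 statements merged into one kernel-verified Lean document; each statement's English description precedes it below -/
import Mathlib

section
/- Define g : ℕ → ℕ by g(0) = 1 and, for d ≥ 1, g(d) = mex { XOR_{k=m}^{d-1} g(k) : m = 0, 1, …, d } (the term for m = d being the empty XOR, equal to 0). Then g(d) = 2^(ν₂(d+1)) for all d ∈ ℕ. -/
/-!
The Gray code `γ n = n ^^^ n / 2` is additive for `^^^` and injective, maps `[0, 2^v)` onto itself,
and satisfies `γ (k + 1) ^^^ γ k = 2 ^ ν₂(k + 1)`. Hence, by induction, `g k = γ k ^^^ γ (k + 1)`,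
the xors in the recursion telescope to `γ (m ^^^ d)`, and the option set at `d` is
`{γ (m ^^^ d) : m ≤ d}`. Writing `d = 2^(v+1) c + (2^v - 1)` with `v = ν₂(d + 1)`, every `m = d ^^^ x`
with `x < 2^v` is at most `d`, so all values below `2^v` occur, while `2^v = γ (2^(v+1) - 1)` would
require `m = d ^^^ (2^(v+1) - 1) = d + 1`.
-/

noncomputable def mex (S : Set ℕ) : ℕ := sInf {n | n ∉ S}

def xorIco (f : ℕ → ℕ) (m n : ℕ) : ℕ :=
  ((List.range' m (n - m)).map f).foldr (· ^^^ ·) 0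

theorem mex_eq_of_forall_lt_mem {S : Set ℕ} {a : ℕ} (hlt : ∀ n < a, n ∈ S) (ha : a ∉ S) :
    mex S = a :=
  le_antisymm (Nat.sInf_le ha) (le_csInf ⟨a, ha⟩ fun _ hn => not_lt.1 fun h => hn (hlt _ h))

theorem xorIco_eq_xor_of_eq_xor_succ {f F : ℕ → ℕ} {m n : ℕ} (hmn : m ≤ n)
    (hf : ∀ k, m ≤ k → k < n → f k = F k ^^^ F (k + 1)) : xorIco f m n = F m ^^^ F n := by
  obtain ⟨j, rfl⟩ := Nat.exists_eq_add_of_le hmn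
  clear hmn
  simp only [xorIco, Nat.add_sub_cancel_left]
  induction j generalizing m with
  | zero => simp
  | succ j ih =>
    rw [List.range'_succ, List.map_cons, List.foldr_cons,
      ih (m := m + 1) fun k hk hkj => hf k (by omega) (by omega), hf m le_rfl (by omega),
      Nat.xor_assoc, Nat.xor_xor_cancel_left, Nat.add_right_comm, Nat.add_assoc]

namespace Nat

theorem two_pow_mul_add_xor {n a r s : ℕ} (hr : r < 2 ^ n) (hs : s < 2 ^ n) :
    (2 ^ n * a + r) ^^^ s = 2 ^ n * a + (r ^^^ s) := by
  refine Nat.eq_of_testBit_eq fun j => ?_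
  rw [testBit_xor, testBit_two_pow_mul_add _ hr, testBit_two_pow_mul_add _ (xor_lt_two_pow hr hs),
    testBit_xor]
  split_ifs with hj
  · rfl
  · rw [testBit_lt_two_pow (hs.trans_le (pow_le_pow_right₀ one_le_two (not_lt.1 hj))),
      Bool.xor_false]

theorem two_pow_sub_one_xor_two_pow_succ_sub_one (v : ℕ) :
    (2 ^ v - 1) ^^^ (2 ^ (v + 1) - 1) = 2 ^ v := by
  refine Nat.eq_of_testBit_eq fun j => ?_
  simp only [testBit_xor, testBit_two_pow_sub_one, testBit_two_pow]
  rcases lt_trichotomy j v with h | rfl | h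
  · simp [h, h.ne', Nat.lt_succ_of_lt h]
  · simp
  · simp [h, h.ne, h.not_gt]

theorem exists_eq_two_pow_padicValNat_succ_mul_add (d : ℕ) :
    ∃ c, d = 2 ^ (padicValNat 2 (d + 1) + 1) * c + (2 ^ padicValNat 2 (d + 1) - 1) := by
  set v := padicValNat 2 (d + 1)
  obtain ⟨q, hq⟩ : 2 ^ v ∣ d + 1 := pow_padicValNat_dvd (p := 2)
  have hq_odd : Odd q := by
    refine not_even_iff_odd.1 fun ⟨c, hc⟩ =>
      pow_succ_padicValNat_not_dvd (p := 2) (n := d + 1) d.succ_ne_zero ?_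
    exact ⟨c, show d + 1 = 2 ^ (v + 1) * c by rw [hq, hc, pow_succ]; ring⟩
  obtain ⟨c, rfl⟩ := hq_odd
  refine ⟨c, ?_⟩
  have hpos : 0 < 2 ^ v := Nat.two_pow_pos v
  have : d + 1 = 2 ^ (v + 1) * c + 2 ^ v := by rw [hq, pow_succ]; ring
  omega

section LowOnes

variable (c v : ℕ)

theorem two_pow_succ_mul_add_xor_two_pow_succ_sub_one :
    (2 ^ (v + 1) * c + (2 ^ v - 1)) ^^^ (2 ^ (v + 1) - 1) = 2 ^ (v + 1) * c + (2 ^ v - 1) + 1 := by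
  have hpos : 0 < 2 ^ v := Nat.two_pow_pos v
  have hsucc : 2 ^ (v + 1) = 2 * 2 ^ v := by ring
  rw [two_pow_mul_add_xor (by omega) (by omega), two_pow_sub_one_xor_two_pow_succ_sub_one]
  omega

theorem two_pow_succ_mul_add_xor_le {x : ℕ} (hx : x < 2 ^ v) :
    (2 ^ (v + 1) * c + (2 ^ v - 1)) ^^^ x ≤ 2 ^ (v + 1) * c + (2 ^ v - 1) := by
  have hpos : 0 < 2 ^ v := Nat.two_pow_pos v
  have hsucc : 2 ^ (v + 1) = 2 * 2 ^ v := by ring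
  have hlt : (2 ^ v - 1) ^^^ x < 2 ^ v := xor_lt_two_pow (by omega) hx
  rw [two_pow_mul_add_xor (by omega) (by omega)]
  omega

end LowOnes

end Nat

def grayCode (n : ℕ) : ℕ := n ^^^ n / 2

theorem grayCode_xor (m n : ℕ) : grayCode (m ^^^ n) = grayCode m ^^^ grayCode n := by
  simp only [grayCode, Nat.xor_div_two]
  ac_rfl

theorem grayCode_injective : Function.Injective grayCode := by
  intro a b hab
  have h : grayCode (a ^^^ b) = 0 := by rw [grayCode_xor, hab, Nat.xor_self]
  rw [grayCode, Nat.xor_eq_zero_iff] at h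
  rw [← Nat.xor_eq_zero_iff]
  omega

theorem grayCode_surjOn_range (v : ℕ) :
    Set.SurjOn grayCode (Finset.range (2 ^ v)) (Finset.range (2 ^ v)) := by
  refine Finset.surjOn_of_injOn_of_card_le grayCode (fun n hn => ?_)
    grayCode_injective.injOn le_rfl
  have hn : n < 2 ^ v := Finset.mem_range.1 hn
  exact Finset.mem_range.2 (Nat.xor_lt_two_pow hn ((Nat.div_le_self n 2).trans_lt hn))

theorem grayCode_two_pow_succ_sub_one (v : ℕ) : grayCode (2 ^ (v + 1) - 1) = 2 ^ v := by
  have hpos : 0 < 2 ^ v := Nat.two_pow_pos v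
  have hdiv : (2 ^ (v + 1) - 1) / 2 = 2 ^ v - 1 := by rw [pow_succ]; omega
  rw [grayCode, hdiv, Nat.xor_comm, Nat.two_pow_sub_one_xor_two_pow_succ_sub_one]

theorem grayCode_succ_xor (k : ℕ) :
    grayCode (k + 1) ^^^ grayCode k = 2 ^ padicValNat 2 (k + 1) := by
  obtain ⟨c, hc⟩ := Nat.exists_eq_two_pow_padicValNat_succ_mul_add k
  set v := padicValNat 2 (k + 1)
  have hsucc := Nat.two_pow_succ_mul_add_xor_two_pow_succ_sub_one c v
  rw [← hc] at hsucc
  rw [← grayCode_xor, ← hsucc, Nat.xor_comm k, Nat.xor_xor_cancel_right,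
    grayCode_two_pow_succ_sub_one]

theorem mex_grayCode_xor (d : ℕ) :
    mex {w | ∃ m ≤ d, w = grayCode (m ^^^ d)} = 2 ^ padicValNat 2 (d + 1) := by
  obtain ⟨c, hc⟩ := Nat.exists_eq_two_pow_padicValNat_succ_mul_add d
  set v := padicValNat 2 (d + 1)
  apply mex_eq_of_forall_lt_mem
  · intro n hn
    obtain ⟨x, hx, rfl⟩ := grayCode_surjOn_range v (Finset.mem_range.2 hn)
    refine ⟨d ^^^ x, ?_, by rw [Nat.xor_comm (d ^^^ x) d, Nat.xor_xor_cancel_left]⟩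
    rw [hc]
    exact Nat.two_pow_succ_mul_add_xor_le c v (Finset.mem_range.1 hx)
  · rintro ⟨m, hm, h⟩
    rw [← grayCode_two_pow_succ_sub_one] at h
    have hm' : m = d ^^^ (2 ^ (v + 1) - 1) := by
      rw [grayCode_injective h, Nat.xor_comm m, Nat.xor_xor_cancel_left]
    have hsucc := Nat.two_pow_succ_mul_add_xor_two_pow_succ_sub_one c v
    rw [← hc, ← hm'] at hsucc
    omega

theorem stmt2 (g : ℕ → ℕ) (h0 : g 0 = 1)
    (hrec : ∀ d ≥ 1, g d = mex {v | ∃ m ≤ d, v = xorIco g m d}) :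
    ∀ d : ℕ, g d = 2 ^ (padicValNat 2 (d + 1)) := by
  intro d
  induction d using Nat.strong_induction_on with
  | _ d ih =>
  rcases Nat.eq_zero_or_pos d with rfl | hd
  · simpa using h0
  have hg : ∀ k < d, g k = grayCode k ^^^ grayCode (k + 1) := fun k hk => by
    rw [ih k hk, ← grayCode_succ_xor, Nat.xor_comm]
  have hoptions :
      {w | ∃ m ≤ d, w = xorIco g m d} = {w | ∃ m ≤ d, w = grayCode (m ^^^ d)} := by
    ext w
    refine exists_congr fun m => and_congr_right fun hm => ?_
    rw [xorIco_eq_xor_of_eq_xor_succ hm fun k _ hkd => hg k hkd, grayCode_xor]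
  rw [hrec d hd, hoptions, mex_grayCode_xor]
end

section
/- Let G(n,r) = C(n,r) mod 2 and g(d) = (d mod 3) + 1, and s(d,m) = XOR_{k=m}^{d−1} G(d−m, k−m)·g(k). Then for every d ∈ ℕ, g(d) = mex { s(d,m) : m = 0, 1, …, d }; that is, the function d ↦ (d mod 3) + 1 satisfies the Grundy recurrence of the ruler game on the subspace lattice over a finite field of odd order. -/
def G (n r : ℕ) : ℕ := Nat.choose n r % 2

def g (d : ℕ) : ℕ := d % 3 + 1

def s (d m : ℕ) : ℕ := xorIco (fun k => G (d - m) (k - m) * g k) m d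

/-- xor-fold over `range n`. -/
def X (f : ℕ → ℕ) (n : ℕ) : ℕ := ((List.range n).map f).foldr (· ^^^ ·) 0

lemma xor_left_comm (a b c : ℕ) : a ^^^ (b ^^^ c) = b ^^^ (a ^^^ c) := by
  rw [← Nat.xor_assoc, Nat.xor_comm a b, Nat.xor_assoc]

lemma xor_cancel (a b : ℕ) : a ^^^ (a ^^^ b) = b := by
  rw [← Nat.xor_assoc, Nat.xor_self, Nat.zero_xor]

lemma foldr_xor_init (l : List ℕ) (i : ℕ) :
    l.foldr (· ^^^ ·) i = l.foldr (· ^^^ ·) 0 ^^^ i := by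
  induction l with
  | nil => simp
  | cons a l ih => rw [List.foldr_cons, List.foldr_cons, ih, Nat.xor_assoc]

lemma X_zero (f : ℕ → ℕ) : X f 0 = 0 := rfl

lemma X_succ_head (f : ℕ → ℕ) (n : ℕ) :
    X f (n + 1) = f 0 ^^^ X (fun j => f (j + 1)) n := by
  simp only [X, List.range_succ_eq_map, List.map_cons, List.map_map, List.foldr_cons]
  rfl

lemma X_succ_last (f : ℕ → ℕ) (n : ℕ) :
    X f (n + 1) = X f n ^^^ f n := by
  unfold X
  rw [List.range_succ, List.map_append, List.foldr_append]
  simp only [List.map_cons, List.map_nil, List.foldr_cons, List.foldr_nil, Nat.xor_zero]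
  rw [foldr_xor_init]

lemma X_congr {f h : ℕ → ℕ} (n : ℕ) (H : ∀ j < n, f j = h j) : X f n = X h n := by
  induction n with
  | zero => rfl
  | succ n ih =>
      rw [X_succ_last, X_succ_last, ih (fun j hj => H j (by omega)), H n (by omega)]

lemma X_xor (a b : ℕ → ℕ) (n : ℕ) :
    X (fun j => a j ^^^ b j) n = X a n ^^^ X b n := by
  induction n with
  | zero => simp [X_zero]
  | succ n ih =>
      rw [X_succ_last, X_succ_last, X_succ_last, ih]
      simp [Nat.xor_assoc, Nat.xor_comm, xor_left_comm]

/-- binomial coefficient mod 2 -/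
def c (n j : ℕ) : ℕ := Nat.choose n j % 2

/-- the partial xor-sum as a function of the gap and the lower end. -/
def t (n r : ℕ) : ℕ := X (fun j => c n j * g (r + j)) n

lemma t_zero (r : ℕ) : t 0 r = 0 := rfl

lemma s_eq_t (d m : ℕ) : s d m = t (d - m) m := by
  unfold s t xorIco X G c
  rw [List.range'_eq_map_range, List.map_map]
  congr 1
  apply List.map_congr_left
  intro j hj
  simp only [Function.comp_apply]
  rw [show m + j - m = j by omega]

lemma g_add_three (r : ℕ) : g (r + 3) = g r := by
  unfold g; omega

lemma c_pascal (n j : ℕ) : c (n + 1) (j + 1) = c n (j + 1) ^^^ c n j := by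
  unfold c
  rw [Nat.choose_succ_succ]
  rcases Nat.mod_two_eq_zero_or_one (Nat.choose n j) with h | h <;>
    rcases Nat.mod_two_eq_zero_or_one (Nat.choose n (j+1)) with h' | h' <;>
      · rw [Nat.add_mod, h, h']; decide
lemma c_le_one (n j : ℕ) : c n j ≤ 1 := by
  unfold c; omega

lemma bit_mul_xor (a b h : ℕ) (ha : a ≤ 1) (hb : b ≤ 1) :
    (a ^^^ b) * h = a * h ^^^ b * h := by
  interval_cases a <;> interval_cases b <;> simp

lemma t_rec (n r : ℕ) : t (n + 1) r = t n r ^^^ t n (r + 1) ^^^ g (r + n) := by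
  have h1 : t (n + 1) r
      = g r ^^^ X (fun j => c n (j + 1) * g (r + (j + 1)) ^^^ c n j * g (r + (j + 1))) n := by
    unfold t
    rw [X_succ_head]
    congr 1
    · simp [c, g]
    · apply X_congr
      intro j _
      rw [c_pascal, bit_mul_xor _ _ _ (c_le_one _ _) (c_le_one _ _)]
  have h2 : X (fun j => c n j * g (r + (j + 1))) n = t n (r + 1) := by
    unfold t
    apply X_congr
    intro j _
    congr 2
    omega
  have h5 : X (fun j => c n j * g (r + j)) (n + 1) = t n r ^^^ g (r + n) := by
    rw [X_succ_last]
    unfold t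
    congr 1
    simp [c, Nat.choose_self]
  have h4 : t n r ^^^ g (r + n)
      = g r ^^^ X (fun j => c n (j + 1) * g (r + (j + 1))) n := by
    rw [← h5, X_succ_head]
    congr 1
    simp [c, g]
  have h3 : X (fun j => c n (j + 1) * g (r + (j + 1))) n
      = t n r ^^^ g (r + n) ^^^ g r := by
    have h6 : g r ^^^ (t n r ^^^ g (r + n))
        = X (fun j => c n (j + 1) * g (r + (j + 1))) n := by
      rw [h4, xor_cancel]
    rw [← h6]
    simp [Nat.xor_assoc, Nat.xor_comm, xor_left_comm]
  rw [h1, X_xor, h2, h3]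
  simp [Nat.xor_assoc, Nat.xor_comm, xor_left_comm, xor_cancel, Nat.xor_self,
    Nat.xor_zero, Nat.zero_xor]

lemma t_r_add_three (n r : ℕ) : t n (r + 3) = t n r := by
  unfold t
  apply X_congr
  intro j _
  have h : r + 3 + j = (r + j) + 3 := by omega
  rw [h, g_add_three]

lemma g_sum_zero (r : ℕ) : g r ^^^ g (r + 1) ^^^ g (r + 2) = 0 := by
  unfold g
  have h : r % 3 = 0 ∨ r % 3 = 1 ∨ r % 3 = 2 := by omega
  rcases h with h | h | h <;>
    · have h1 : (r + 1) % 3 = (r % 3 + 1) % 3 := by omega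
      have h2 : (r + 2) % 3 = (r % 3 + 2) % 3 := by omega
      rw [h1, h2, h]
      decide

lemma t_three (r : ℕ) : t 3 r = 0 := by
  have e1 : ∀ r, t 1 r = g r := by
    intro r
    rw [show (1:ℕ) = 0 + 1 from rfl, t_rec, t_zero, t_zero]
    simp
  have e2 : ∀ r, t 2 r = g r := by
    intro r
    rw [show (2:ℕ) = 1 + 1 from rfl, t_rec, e1, e1]
    rw [Nat.xor_assoc, Nat.xor_self, Nat.xor_zero]
  rw [show (3:ℕ) = 2 + 1 from rfl, t_rec, e2, e2]
  exact g_sum_zero r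

lemma t_n_add_three (n : ℕ) : ∀ r, t (n + 3) r = t n r := by
  induction n with
  | zero => intro r; rw [t_three, t_zero]
  | succ n ih =>
      intro r
      have h : n + 1 + 3 = (n + 3) + 1 := by omega
      rw [h, t_rec, ih, ih, show r + (n + 3) = (r + n) + 3 by omega, g_add_three,
        ← t_rec]

lemma t_mod (n r : ℕ) : t n r = t (n % 3) (r % 3) := by
  have hn : ∀ q a r, t (3 * q + a) r = t a r := by
    intro q
    induction q with
    | zero => intro a r; simp
    | succ q ih =>
        intro a r
        have h : 3 * (q + 1) + a = (3 * q + a) + 3 := by omega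
        rw [h, t_n_add_three, ih]
  have hr : ∀ q n b, t n (3 * q + b) = t n b := by
    intro q
    induction q with
    | zero => intro n b; simp
    | succ q ih =>
        intro n b
        have h : 3 * (q + 1) + b = (3 * q + b) + 3 := by omega
        rw [h, t_r_add_three, ih]
  calc t n r = t (3 * (n / 3) + n % 3) r := by rw [Nat.div_add_mod]
    _ = t (n % 3) r := hn _ _ _
    _ = t (n % 3) (3 * (r / 3) + r % 3) := by rw [Nat.div_add_mod]
    _ = t (n % 3) (r % 3) := hr _ _ _

lemma s_val (d m : ℕ) : s d m = t ((d - m) % 3) (m % 3) := by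
  rw [s_eq_t, t_mod]

theorem stmt6 : ∀ d : ℕ, g d = mex {v | ∃ m ≤ d, v = s d m} := by
  intro d
  set S : Set ℕ := {v | ∃ m ≤ d, v = s d m} with hS
  have t01 : t 0 1 = 0 := by decide
  have t02 : t 0 2 = 0 := by decide
  have t10 : t 1 0 = 1 := by decide
  have t11 : t 1 1 = 2 := by decide
  have t12 : t 1 2 = 3 := by decide
  have t20 : t 2 0 = 1 := by decide
  have t21 : t 2 1 = 2 := by decide
  have t22 : t 2 2 = 3 := by decide
  have hgd : g d = d % 3 + 1 := rfl
  -- g d ∉ S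
  have hnot : g d ∉ S := by
    rintro ⟨m, hm, hv⟩
    rw [s_val] at hv
    have h3 : d % 3 = 0 ∨ d % 3 = 1 ∨ d % 3 = 2 := by omega
    have hm3 : m % 3 = 0 ∨ m % 3 = 1 ∨ m % 3 = 2 := by omega
    rcases h3 with h | h | h <;> rcases hm3 with h' | h' | h'
    · rw [show (d - m) % 3 = 0 by omega, h', t_zero] at hv; omega
    · rw [show (d - m) % 3 = 2 by omega, h', t21] at hv; omega
    · rw [show (d - m) % 3 = 1 by omega, h', t12] at hv; omega
    · rw [show (d - m) % 3 = 1 by omega, h', t10] at hv; omega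
    · rw [show (d - m) % 3 = 0 by omega, h', t_zero] at hv; omega
    · rw [show (d - m) % 3 = 2 by omega, h', t22] at hv; omega
    · rw [show (d - m) % 3 = 2 by omega, h', t20] at hv; omega
    · rw [show (d - m) % 3 = 1 by omega, h', t11] at hv; omega
    · rw [show (d - m) % 3 = 0 by omega, h', t_zero] at hv; omega
  -- all smaller values in S
  have hmem : ∀ v < g d, v ∈ S := by
    intro v hv
    have h3 : d % 3 = 0 ∨ d % 3 = 1 ∨ d % 3 = 2 := by omega
    rw [hgd] at hv
    rcases h3 with h | h | h
    · have hv0 : v = 0 := by omega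
      exact ⟨d, le_refl d, by rw [hv0, s_val, show (d - d) % 3 = 0 by omega, t_zero]⟩
    · have hd1 : 1 ≤ d := by omega
      have hv01 : v = 0 ∨ v = 1 := by omega
      rcases hv01 with hv0 | hv1
      · exact ⟨d, le_refl d, by rw [hv0, s_val, show (d - d) % 3 = 0 by omega, t_zero]⟩
      · exact ⟨d - 1, by omega,
          by rw [hv1, s_val, show (d - (d-1)) % 3 = 1 by omega, show (d-1) % 3 = 0 by omega, t10]⟩
    · have hd2 : 2 ≤ d := by omega
      have hv012 : v = 0 ∨ v = 1 ∨ v = 2 := by omega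
      rcases hv012 with hv0 | hv1 | hv2
      · exact ⟨d, le_refl d, by rw [hv0, s_val, show (d - d) % 3 = 0 by omega, t_zero]⟩
      · exact ⟨d - 2, by omega,
          by rw [hv1, s_val, show (d - (d-2)) % 3 = 2 by omega, show (d-2) % 3 = 0 by omega, t20]⟩
      · exact ⟨d - 1, by omega,
          by rw [hv2, s_val, show (d - (d-1)) % 3 = 1 by omega, show (d-1) % 3 = 1 by omega, t11]⟩
  -- compute mex
  unfold mex
  apply le_antisymm
  · by_contra hlt
    push_neg at hlt
    have hne : {n | n ∉ S}.Nonempty := ⟨g d, hnot⟩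
    have hmem' := Nat.sInf_mem hne
    exact hmem' (hmem _ hlt)
  · exact Nat.sInf_le hnot
end
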